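/- Fix ν > 2 and θ ∈ [1/2, 1]. For every h > 0, the 2×2 matrix A_θ(h) with entries a₁₁ = (1 - (θh² + νh)(1-θ))/(1+Δ), a₁₂ = -h/(1+Δ), a₂₁ = h/(1+Δ), a₂₂ = (1 - θ(1-θ)h² + νθh)/(1+Δ), where Δ = θ(θh² + νh), satisfies |tr A_θ| < 1 + det A_θ < 2, and its two eigenvalues λ_{1,2} = (2 + νh(2θ-1) - 2θ(1-θ)h² ± √(ν²-4) h)/(2(1+Δ)) are real, distinct, and of modulus strictly less than 1. -/

import Mathlib

/-!
Write `D = 1 + Δ > 0`. Then `tr A = T / D` and `det A = E / D` for explicit polynomials `T`, `E`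
in `θ, ν, h`, and `D - E`, `D + E - T`, `D + E + T` are sums of nonnegative terms with a positive
one, while `T² - 4DE = (ν² - 4) h²`. Hence `det A < 1` and `|tr A| < 1 + det A` (the Jury
conditions for `x² - (tr A) x + det A`), the discriminant is positive, and the two real roots
`λ_{1,2} = (tr A ± √(ν² - 4) h / D) / 2` lie in `(-1, 1)`.
-/

noncomputable section

/-- `Δ = θ(θh² + νh)`. -/
def Δ (θ ν h : ℝ) : ℝ := θ * (θ * h ^ 2 + ν * h)

def a11 (θ ν h : ℝ) : ℝ := (1 - (θ * h ^ 2 + ν * h) * (1 - θ)) / (1 + Δ θ ν h)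
def a12 (θ ν h : ℝ) : ℝ := -h / (1 + Δ θ ν h)
def a21 (θ ν h : ℝ) : ℝ := h / (1 + Δ θ ν h)
def a22 (θ ν h : ℝ) : ℝ := (1 - θ * (1 - θ) * h ^ 2 + ν * θ * h) / (1 + Δ θ ν h)

/-- Trace of the one-step matrix of the stochastic θ-method. -/
def trA (θ ν h : ℝ) : ℝ := a11 θ ν h + a22 θ ν h

/-- Determinant of the one-step matrix of the stochastic θ-method. -/
def detA (θ ν h : ℝ) : ℝ := a11 θ ν h * a22 θ ν h - a12 θ ν h * a21 θ ν h

/-- Eigenvalues `λ_{1,2}` of the one-step matrix. -/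
def lam1 (θ ν h : ℝ) : ℝ :=
  (2 + ν * h * (2 * θ - 1) - 2 * θ * (1 - θ) * h ^ 2 + Real.sqrt (ν ^ 2 - 4) * h) /
    (2 * (1 + Δ θ ν h))

def lam2 (θ ν h : ℝ) : ℝ :=
  (2 + ν * h * (2 * θ - 1) - 2 * θ * (1 - θ) * h ^ 2 - Real.sqrt (ν ^ 2 - 4) * h) /
    (2 * (1 + Δ θ ν h))

theorem sq_sub_mul_add_eq_zero_of_discrim {t d r x : ℝ} (hr : r ^ 2 = t ^ 2 - 4 * d)
    (hx : x = (t + r) / 2 ∨ x = (t - r) / 2) : x ^ 2 - t * x + d = 0 := by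
  rcases hx with rfl | rfl <;> linear_combination hr / 4

theorem abs_lt_one_of_sq_sub_mul_add_eq_zero {t d x : ℝ} (hx : x ^ 2 - t * x + d = 0)
    (ht : |t| < 1 + d) (hd : d < 1) : |x| < 1 := by
  rw [abs_lt] at ht ⊢
  obtain ⟨ht₁, ht₂⟩ := ht
  -- with `y = t - x` the other root, `(1 - x)(1 - y) = 1 - t + d > 0` and `(1 + x)(1 + y) > 0`
  constructor <;> nlinarith

section OneStepMatrix

variable (θ ν h : ℝ)

theorem one_add_Δ_pos (hθ : 0 ≤ θ) (hν : 0 ≤ ν) (hh : 0 ≤ h) : 0 < 1 + Δ θ ν h := by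
  unfold Δ; positivity

theorem trA_eq :
    trA θ ν h = (2 + ν * h * (2 * θ - 1) - 2 * θ * (1 - θ) * h ^ 2) / (1 + Δ θ ν h) := by
  unfold trA a11 a22 Δ
  rw [← add_div]
  ring_nf

theorem detA_eq (hD : 1 + Δ θ ν h ≠ 0) :
    detA θ ν h = (1 + (1 - θ) ^ 2 * h ^ 2 - (1 - θ) * ν * h) / (1 + Δ θ ν h) := by
  unfold detA a11 a12 a21 a22
  field_simp
  unfold Δ
  ring

variable {θ ν h}

theorem one_sub_detA (hD : 1 + Δ θ ν h ≠ 0) :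
    1 - detA θ ν h = ((2 * θ - 1) * h ^ 2 + ν * h) / (1 + Δ θ ν h) := by
  rw [detA_eq θ ν h hD]
  field_simp
  unfold Δ
  ring

theorem one_add_detA_sub_trA (hD : 1 + Δ θ ν h ≠ 0) :
    1 + detA θ ν h - trA θ ν h = h ^ 2 / (1 + Δ θ ν h) := by
  rw [detA_eq θ ν h hD, trA_eq]
  field_simp
  unfold Δ
  ring

theorem one_add_detA_add_trA (hD : 1 + Δ θ ν h ≠ 0) :
    1 + detA θ ν h + trA θ ν h =
      ((2 * θ - 1) ^ 2 * h ^ 2 + 2 * ν * h * (2 * θ - 1) + 4) / (1 + Δ θ ν h) := by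
  rw [detA_eq θ ν h hD, trA_eq]
  field_simp
  unfold Δ
  ring

theorem trA_sq_sub_four_mul_detA (hD : 1 + Δ θ ν h ≠ 0) (hν : 4 ≤ ν ^ 2) :
    trA θ ν h ^ 2 - 4 * detA θ ν h = (Real.sqrt (ν ^ 2 - 4) * h / (1 + Δ θ ν h)) ^ 2 := by
  rw [detA_eq θ ν h hD, trA_eq, div_pow (Real.sqrt _ * h), mul_pow, Real.sq_sqrt (by linarith)]
  field_simp
  unfold Δ
  ring

theorem lam1_eq (hD : 1 + Δ θ ν h ≠ 0) :
    lam1 θ ν h = (trA θ ν h + Real.sqrt (ν ^ 2 - 4) * h / (1 + Δ θ ν h)) / 2 := by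
  rw [lam1, trA_eq]
  field_simp

theorem lam2_eq (hD : 1 + Δ θ ν h ≠ 0) :
    lam2 θ ν h = (trA θ ν h - Real.sqrt (ν ^ 2 - 4) * h / (1 + Δ θ ν h)) / 2 := by
  rw [lam2, trA_eq]
  field_simp

end OneStepMatrix

theorem theta_method_stability
    (ν θ : ℝ) (hν : 2 < ν) (hθ : θ ∈ Set.Icc (1/2 : ℝ) 1) :
    ∀ h : ℝ, 0 < h →
      |trA θ ν h| < 1 + detA θ ν h ∧ 1 + detA θ ν h < 2 ∧
      lam1 θ ν h ^ 2 - trA θ ν h * lam1 θ ν h + detA θ ν h = 0 ∧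
      lam2 θ ν h ^ 2 - trA θ ν h * lam2 θ ν h + detA θ ν h = 0 ∧
      lam1 θ ν h ≠ lam2 θ ν h ∧
      |lam1 θ ν h| < 1 ∧ |lam2 θ ν h| < 1 := by
  intro h hh
  have h2θ : 0 ≤ 2 * θ - 1 := by linarith [hθ.1]
  have hD : 0 < 1 + Δ θ ν h := one_add_Δ_pos θ ν h (by linarith) (by linarith) hh.le
  have hdet : 0 < 1 - detA θ ν h := by rw [one_sub_detA hD.ne']; positivity
  have hsub : 0 < 1 + detA θ ν h - trA θ ν h := by rw [one_add_detA_sub_trA hD.ne']; positivity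
  have hadd : 0 < 1 + detA θ ν h + trA θ ν h := by rw [one_add_detA_add_trA hD.ne']; positivity
  have htr : |trA θ ν h| < 1 + detA θ ν h := abs_lt.2 ⟨by linarith, by linarith⟩
  set r := Real.sqrt (ν ^ 2 - 4) * h / (1 + Δ θ ν h)
  have hs : 0 < Real.sqrt (ν ^ 2 - 4) := Real.sqrt_pos.2 (by nlinarith)
  have hr : 0 < r := by positivity
  have hdisc := trA_sq_sub_four_mul_detA hD.ne' (by nlinarith)
  have heig1 := sq_sub_mul_add_eq_zero_of_discrim hdisc.symm (.inl (lam1_eq hD.ne'))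
  have heig2 := sq_sub_mul_add_eq_zero_of_discrim hdisc.symm (.inr (lam2_eq hD.ne'))
  refine ⟨htr, by linarith, heig1, heig2, ?_, abs_lt_one_of_sq_sub_mul_add_eq_zero heig1 htr
    (by linarith), abs_lt_one_of_sq_sub_mul_add_eq_zero heig2 htr (by linarith)⟩
  rw [lam1_eq hD.ne', lam2_eq hD.ne']
  linarith

end
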